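/- Consider the group homomorphism Ψ from U(1) × SU(2) × SU(3) to U(2) × U(3) given by Ψ(c, g, h) = (c³·g, c^{−2}·h). Then the kernel of Ψ is exactly the cyclic subgroup generated by the element (ζ₂^{-1}·ζ₃^{-1}, ζ₂·1₂, ζ₃·1₃) = (ζ₆, −1₂, ζ₃·1₃), which has order 6. -/

import Mathlib

/-!
If `Ψ(c, g, h) = (c³g, c⁻²h)` is trivial then `g = c⁻³·1` and `h = c²·1`, so a kernel element is
determined by its `U(1)` component `c`, and `det g = c⁻⁶ = 1` makes `c` a sixth root of unity.
Thus the projection to `U(1)` embeds the kernel into the sixth roots of unity, and the kernel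
element `(ζ₆, ζ₂·1₂, ζ₃·1₃)` lying over the generator `ζ₆` generates the kernel and has order `6`.
-/

/-- `ζ n = exp(2πi/n)`, the standard primitive `n`-th root of unity in `ℂ`. -/
noncomputable def zeta (n : ℕ) : ℂ := Complex.exp (2 * Real.pi * Complex.I / n)

/-- The special unitary group `SU(n)`, as the subgroup of the unitary group
`Matrix.unitaryGroup n ℂ` consisting of the matrices of determinant `1`. -/
noncomputable def SU (n : Type*) [DecidableEq n] [Fintype n] :
    Subgroup (Matrix.unitaryGroup n ℂ) :=
  MonoidHom.ker ((Units.map (Matrix.detMonoidHom : Matrix n n ℂ →* ℂ)).comp Unitary.toUnits)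

theorem mem_SU_iff {n : Type*} [DecidableEq n] [Fintype n] {x : Matrix.unitaryGroup n ℂ} :
    x ∈ SU n ↔ (x : Matrix n n ℂ).det = 1 := by
  simp [SU, MonoidHom.mem_ker, Units.ext_iff]

theorem Circle.coe_mem_unitary (c : Circle) : (c : ℂ) ∈ unitary ℂ := by
  simp [Unitary.mem_iff, Complex.mul_conj, Complex.conj_mul', Circle.norm_coe]

section Scalar

variable (n : Type*) [DecidableEq n] [Fintype n]

noncomputable def scalarUnitary : Circle →* Matrix.unitaryGroup n ℂ where
  toFun c := ⟨(c : ℂ) • 1, Unitary.smul_mem_of_mem c.coe_mem_unitary (one_mem _)⟩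
  map_one' := Subtype.ext (one_smul ℂ 1)
  map_mul' c d := Subtype.ext (by simp [mul_smul, smul_comm (c : ℂ)])

variable {n}

@[simp]
theorem coe_scalarUnitary (c : Circle) :
    ((scalarUnitary n c : Matrix.unitaryGroup n ℂ) : Matrix n n ℂ) = (c : ℂ) • 1 := rfl

theorem commute_scalarUnitary (c : Circle) (g : Matrix.unitaryGroup n ℂ) :
    Commute (scalarUnitary n c) g :=
  Subtype.ext (by simp)

theorem scalarUnitary_mem_SU_iff (c : Circle) :
    scalarUnitary n c ∈ SU n ↔ c ^ Fintype.card n = 1 := by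
  rw [mem_SU_iff, coe_scalarUnitary, Matrix.det_smul, Matrix.det_one, mul_one, ← Circle.coe_pow,
    Circle.coe_eq_one]

end Scalar

theorem zeta_two : zeta 2 = -1 := by
  rw [zeta, ← Complex.exp_pi_mul_I]
  congr 1
  push_cast
  ring

theorem zeta_mul_pow (m : ℕ) {n : ℕ} (hn : n ≠ 0) : zeta (m * n) ^ n = zeta m := by
  rw [zeta, zeta, ← Complex.exp_nat_mul]
  congr 1
  push_cast
  field_simp

theorem isPrimitiveRoot_zeta {n : ℕ} (hn : n ≠ 0) : IsPrimitiveRoot (zeta n) n := by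
  simpa [zeta] using Complex.isPrimitiveRoot_exp n hn

noncomputable def circleZeta (n : ℕ) : Circle := Circle.exp (2 * Real.pi / n)

@[simp]
theorem coe_circleZeta (n : ℕ) : (circleZeta n : ℂ) = zeta n := by
  rw [circleZeta, Circle.coe_exp, zeta]
  push_cast
  ring_nf

theorem circleZeta_pow_self (n : ℕ) : circleZeta n ^ n = 1 := by
  rcases eq_or_ne n 0 with rfl | hn
  · exact pow_zero _
  · exact Circle.ext (by simpa using (isPrimitiveRoot_zeta hn).pow_eq_one)

theorem circleZeta_mul_pow (m : ℕ) {n : ℕ} (hn : n ≠ 0) :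
    circleZeta (m * n) ^ n = circleZeta m :=
  Circle.ext (by simp [zeta_mul_pow m hn])

section AdditiveRealization

variable (m n : Type*) [DecidableEq m] [Fintype m] [DecidableEq n] [Fintype n]

noncomputable def additiveRealization (k l : ℤ) :
    Circle × SU m × SU n →* Matrix.unitaryGroup m ℂ × Matrix.unitaryGroup n ℂ :=
  (((scalarUnitary m).comp (zpowGroupHom k)).noncommCoprod
      ((SU m).subtype.comp (MonoidHom.fst _ _)) fun _ _ ↦ commute_scalarUnitary _ _).prod
    (((scalarUnitary n).comp (zpowGroupHom l)).noncommCoprod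
      ((SU n).subtype.comp (MonoidHom.snd _ _)) fun _ _ ↦ commute_scalarUnitary _ _)

variable {m n} {k l : ℤ}

theorem additiveRealization_apply (x : Circle × SU m × SU n) :
    additiveRealization m n k l x =
      (scalarUnitary m (x.1 ^ k) * x.2.1, scalarUnitary n (x.1 ^ l) * x.2.2) := rfl

theorem coe_additiveRealization_fst (x : Circle × SU m × SU n) :
    ((additiveRealization m n k l x).1 : Matrix m m ℂ) =
      (x.1 : ℂ) ^ k • ((x.2.1 : Matrix.unitaryGroup m ℂ) : Matrix m m ℂ) := by
  rw [additiveRealization_apply, Submonoid.coe_mul, coe_scalarUnitary, smul_one_mul,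
    Circle.coe_zpow]

theorem coe_additiveRealization_snd (x : Circle × SU m × SU n) :
    ((additiveRealization m n k l x).2 : Matrix n n ℂ) =
      (x.1 : ℂ) ^ l • ((x.2.2 : Matrix.unitaryGroup n ℂ) : Matrix n n ℂ) := by
  rw [additiveRealization_apply, Submonoid.coe_mul, coe_scalarUnitary, smul_one_mul,
    Circle.coe_zpow]

theorem mem_ker_additiveRealization_iff {x : Circle × SU m × SU n} :
    x ∈ (additiveRealization m n k l).ker ↔
      (x.2.1 : Matrix.unitaryGroup m ℂ) = scalarUnitary m (x.1 ^ (-k)) ∧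
        (x.2.2 : Matrix.unitaryGroup n ℂ) = scalarUnitary n (x.1 ^ (-l)) := by
  rw [MonoidHom.mem_ker, additiveRealization_apply, Prod.mk_eq_one, mul_eq_one_iff_eq_inv',
    mul_eq_one_iff_eq_inv', zpow_neg, zpow_neg, map_inv, map_inv]

theorem fst_injOn_ker_additiveRealization :
    Set.InjOn Prod.fst ((additiveRealization m n k l).ker : Set (Circle × SU m × SU n)) := by
  intro x hx y hy hxy
  rw [SetLike.mem_coe, mem_ker_additiveRealization_iff] at hx hy
  exact Prod.ext hxy (Prod.ext (Subtype.ext (by rw [hx.1, hy.1, hxy]))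
    (Subtype.ext (by rw [hx.2, hy.2, hxy])))

theorem fst_pow_eq_one_of_mem_ker_additiveRealization {x : Circle × SU m × SU n}
    (hx : x ∈ (additiveRealization m n k l).ker) : x.1 ^ (k * Fintype.card m) = 1 := by
  have hdet := x.2.1.2
  rw [(mem_ker_additiveRealization_iff.1 hx).1, scalarUnitary_mem_SU_iff, ← zpow_natCast,
    ← zpow_mul, neg_mul, zpow_neg, inv_eq_one] at hdet
  exact hdet

end AdditiveRealization

noncomputable def kernelGenerator : Circle × SU (Fin 2) × SU (Fin 3) :=
  (circleZeta 6,
    ⟨scalarUnitary _ (circleZeta 2), (scalarUnitary_mem_SU_iff _).2 (circleZeta_pow_self 2)⟩,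
    ⟨scalarUnitary _ (circleZeta 3), (scalarUnitary_mem_SU_iff _).2 (circleZeta_pow_self 3)⟩)

theorem kernelGenerator_mem_ker :
    kernelGenerator ∈ (additiveRealization (Fin 2) (Fin 3) 3 (-2)).ker := by
  have h3 : circleZeta 6 ^ 3 = circleZeta 2 := by
    simpa using circleZeta_mul_pow 2 three_ne_zero
  have h2 : circleZeta 6 ^ 2 = circleZeta 3 := by
    simpa using circleZeta_mul_pow 3 two_ne_zero
  rw [mem_ker_additiveRealization_iff, neg_neg, zpow_neg, zpow_ofNat, zpow_ofNat]
  refine ⟨congrArg (scalarUnitary _) ?_, congrArg (scalarUnitary _) h2.symm⟩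
  change _ = (circleZeta 6 ^ 3)⁻¹
  rw [h3]
  exact Circle.ext (by simp [zeta_two])

theorem kernelGenerator_zpow_eq_iff (x : Circle × SU (Fin 2) × SU (Fin 3)) (k : ℤ) :
    kernelGenerator ^ k = x ↔
      (x.1 : ℂ) = zeta 6 ^ k ∧
        ((x.2.1 : Matrix.unitaryGroup (Fin 2) ℂ) : Matrix (Fin 2) (Fin 2) ℂ) = (-1 : ℂ) ^ k • 1 ∧
        ((x.2.2 : Matrix.unitaryGroup (Fin 3) ℂ) : Matrix (Fin 3) (Fin 3) ℂ) = zeta 3 ^ k • 1 := by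
  simp only [Prod.ext_iff, Circle.ext_iff, Subtype.ext_iff, Prod.pow_fst, Prod.pow_snd,
    Subgroup.coe_zpow, kernelGenerator, ← map_zpow, coe_scalarUnitary, Circle.coe_zpow,
    coe_circleZeta, zeta_two, eq_comm]

theorem ker_additiveRealization_eq_zpowers :
    (additiveRealization (Fin 2) (Fin 3) 3 (-2)).ker = Subgroup.zpowers kernelGenerator := by
  refine le_antisymm (fun x hx ↦ ?_) (Subgroup.zpowers_le.2 kernelGenerator_mem_ker)
  have hx6 : (x.1 : ℂ) ^ 6 = 1 := by
    simpa using congrArg ((↑) : Circle → ℂ) (fst_pow_eq_one_of_mem_ker_additiveRealization hx)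
  obtain ⟨i, -, hi⟩ := (isPrimitiveRoot_zeta (by norm_num : 6 ≠ 0)).eq_pow_of_pow_eq_one hx6
  refine ⟨i, ?_⟩
  show kernelGenerator ^ (i : ℤ) = x
  rw [zpow_natCast]
  exact fst_injOn_ker_additiveRealization (pow_mem kernelGenerator_mem_ker i) hx
    (Circle.ext (by simpa [kernelGenerator] using hi))

theorem orderOf_kernelGenerator : orderOf kernelGenerator = 6 := by
  have hfst : Function.Injective
      ((MonoidHom.fst _ _).comp (additiveRealization (Fin 2) (Fin 3) 3 (-2)).ker.subtype) :=
    fun x y h ↦ Subtype.ext (fst_injOn_ker_additiveRealization x.2 y.2 h)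
  calc orderOf kernelGenerator
      = orderOf (⟨kernelGenerator, kernelGenerator_mem_ker⟩ :
          (additiveRealization (Fin 2) (Fin 3) 3 (-2)).ker) := (Subgroup.orderOf_mk _ _).symm
    _ = orderOf (circleZeta 6) := (orderOf_injective _ hfst _).symm
    _ = orderOf (zeta 6) := by
        rw [← coe_circleZeta]
        exact (orderOf_injective Circle.coeHom Circle.coe_injective _).symm
    _ = 6 := (isPrimitiveRoot_zeta (by norm_num)).eq_orderOf.symm

/-- **Kernel of the additive realization of `G_SM` (Section 5.1).**
There is a group homomorphism `Ψ : U(1) × SU(2) × SU(3) →* U(2) × U(3)`,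
`Ψ(c, g, h) = (c³·g, c⁻²·h)`, whose kernel is exactly the cyclic subgroup generated by
`(ζ₂⁻¹ ζ₃⁻¹, ζ₂·1₂, ζ₃·1₃) = (ζ₆, -1₂, ζ₃·1₃)` (described below by the set of its integer
powers), a group of order `6`. -/
theorem kernel_of_additive_realization :
    ∃ Ψ : (Circle × SU (Fin 2) × SU (Fin 3)) →*
        Matrix.unitaryGroup (Fin 2) ℂ × Matrix.unitaryGroup (Fin 3) ℂ,
      (∀ x : Circle × SU (Fin 2) × SU (Fin 3),
        ((Ψ x).1 : Matrix (Fin 2) (Fin 2) ℂ) =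
          (x.1 : ℂ) ^ (3 : ℤ) •
            ((x.2.1 : Matrix.unitaryGroup (Fin 2) ℂ) : Matrix (Fin 2) (Fin 2) ℂ) ∧
        ((Ψ x).2 : Matrix (Fin 3) (Fin 3) ℂ) =
          (x.1 : ℂ) ^ (-2 : ℤ) •
            ((x.2.2 : Matrix.unitaryGroup (Fin 3) ℂ) : Matrix (Fin 3) (Fin 3) ℂ)) ∧
      (∀ x : Circle × SU (Fin 2) × SU (Fin 3),
        x ∈ Ψ.ker ↔ ∃ k : ℤ,
          (x.1 : ℂ) = zeta 6 ^ k ∧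
          ((x.2.1 : Matrix.unitaryGroup (Fin 2) ℂ) : Matrix (Fin 2) (Fin 2) ℂ) =
            (-1 : ℂ) ^ k • (1 : Matrix (Fin 2) (Fin 2) ℂ) ∧
          ((x.2.2 : Matrix.unitaryGroup (Fin 3) ℂ) : Matrix (Fin 3) (Fin 3) ℂ) =
            zeta 3 ^ k • (1 : Matrix (Fin 3) (Fin 3) ℂ)) ∧
      Nat.card Ψ.ker = 6 := by
  refine ⟨additiveRealization (Fin 2) (Fin 3) 3 (-2),
    fun x ↦ ⟨coe_additiveRealization_fst x, coe_additiveRealization_snd x⟩, fun x ↦ ?_, ?_⟩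
  · rw [ker_additiveRealization_eq_zpowers, Subgroup.mem_zpowers_iff]
    exact exists_congr fun k ↦ kernelGenerator_zpow_eq_iff x k
  · rw [ker_additiveRealization_eq_zpowers, Nat.card_zpowers, orderOf_kernelGenerator]
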